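/- arXiv:1810.00680 — 2 statements merged into one kernel-verified Lean document; each statement's English description precedes it below -/
import Mathlib

section
/- Let μ = ESN₂(ω,α,τ) with ω ∈ (−1,1), α = (α₁,α₂) ∈ ℝ², τ ∈ ℝ, and suppose 0 < α₁* < α₂*. Then lim_{x→∞} μ{y ∈ ℝ² : y₁ ≥ x and y₂ ≥ x} / μ{y ∈ ℝ² : y₁ ≥ x} = 0. -/
set_option maxHeartbeats 1000000


open MeasureTheory Filter Matrix

/-- standard normal density -/
noncomputable def stdPdf (t : ℝ) : ℝ := Real.exp (-t^2/2) / Real.sqrt (2*Real.pi)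

/-- standard normal cdf Φ -/
noncomputable def stdCdf (x : ℝ) : ℝ := ∫ t in Set.Iic x, stdPdf t

/-- univariate extended skew-normal cdf Φ_{α,τ} -/
noncomputable def esnCdf (α τ x : ℝ) : ℝ :=
  ∫ t in Set.Iic x, stdPdf t * stdCdf (α*t+τ) / stdCdf (τ / Real.sqrt (1+α^2))

/-- bivariate standard normal density with correlation ω -/
noncomputable def phi2 (ω : ℝ) (x : ℝ × ℝ) : ℝ :=
  Real.exp (-(x.1^2 - 2*ω*x.1*x.2 + x.2^2)/(2*(1-ω^2))) / (2*Real.pi*Real.sqrt (1-ω^2))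

/-- bivariate extended skew-normal density -/
noncomputable def esn2Density (ω a1 a2 τ : ℝ) (x : ℝ × ℝ) : ℝ :=
  phi2 ω x * stdCdf (a1*x.1 + a2*x.2 + τ) / stdCdf (τ / Real.sqrt (1 + a1^2 + a2^2 + 2*ω*a1*a2))

/-- bivariate extended skew-normal distribution ESN₂(ω,α,τ) -/
noncomputable def esn2 (ω a1 a2 τ : ℝ) : Measure (ℝ × ℝ) :=
  volume.withDensity (fun x => ENNReal.ofReal (esn2Density ω a1 a2 τ x))

/-- marginal slant parameter α_j*; `aj` is α_j and `ak` is α_{3-j} -/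
noncomputable def astar (ω aj ak : ℝ) : ℝ := (aj + ω*ak) / Real.sqrt (1 + ak^2*(1-ω^2))

/-- marginal extension parameter τ_j*; `ak` is α_{3-j} -/
noncomputable def tstar (ω ak τ : ℝ) : ℝ := τ / Real.sqrt (1 + ak^2*(1-ω^2))

/-- ᾱ_j = √(1+α_j*²); `aj` is α_j and `ak` is α_{3-j} -/
noncomputable def abar (ω aj ak : ℝ) : ℝ := Real.sqrt (1 + (astar ω aj ak)^2)

/-! ### Auxiliary lemmas -/

lemma stdPdf_eq : stdPdf = fun t => Real.exp (-(1/2)*t^2) / Real.sqrt (2*Real.pi) := by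
  funext t; unfold stdPdf; ring_nf

lemma stdPdf_pos (t : ℝ) : 0 < stdPdf t := by
  unfold stdPdf
  apply div_pos (Real.exp_pos _)
  exact Real.sqrt_pos.2 (by positivity)

lemma stdPdf_integrable : Integrable stdPdf := by
  rw [stdPdf_eq]
  exact (integrable_exp_neg_mul_sq (by norm_num : (0:ℝ) < 1/2)).div_const _

lemma integral_stdPdf : ∫ t, stdPdf t = 1 := by
  rw [stdPdf_eq]
  rw [MeasureTheory.integral_div, integral_gaussian]
  rw [show Real.pi / (1/2) = 2 * Real.pi by ring]
  exact div_self (by positivity)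

lemma stdCdf_mono : Monotone stdCdf := by
  intro x y hxy
  exact setIntegral_mono_set (stdPdf_integrable.integrableOn)
    (Filter.Eventually.of_forall fun t => (stdPdf_pos t).le)
    (HasSubset.Subset.eventuallyLE (Set.Iic_subset_Iic.2 hxy))

lemma stdCdf_pos (x : ℝ) : 0 < stdCdf x := by
  unfold stdCdf
  rw [setIntegral_pos_iff_support_of_nonneg_ae
    (Filter.Eventually.of_forall fun t => (stdPdf_pos t).le) stdPdf_integrable.integrableOn]
  have hsupp : Function.support stdPdf = Set.univ := by
    ext t; simp [Function.support, (stdPdf_pos t).ne']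
  rw [hsupp, Set.univ_inter]
  simp [Real.volume_Iic]

lemma stdCdf_le_one (x : ℝ) : stdCdf x ≤ 1 := by
  rw [← integral_stdPdf]
  exact setIntegral_le_integral stdPdf_integrable
    (Filter.Eventually.of_forall fun t => (stdPdf_pos t).le)

lemma stdCdf_nonneg (x : ℝ) : 0 ≤ stdCdf x := (stdCdf_pos x).le

lemma stdCdf_measurable : Measurable stdCdf := stdCdf_mono.measurable

lemma gauss2_integrable {b : ℝ} (hb : 0 < b) :
    Integrable (fun y : ℝ × ℝ => Real.exp (-b*y.1^2) * Real.exp (-b*y.2^2)) := by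
  rw [Measure.volume_eq_prod]
  exact (integrable_exp_neg_mul_sq hb).mul_prod (integrable_exp_neg_mul_sq hb)

lemma cross_bound (ω y1 y2 : ℝ) : 2*ω*y1*y2 ≤ |ω| * (y1^2+y2^2) := by
  calc 2*ω*y1*y2 ≤ |2*ω*y1*y2| := le_abs_self _
    _ = |ω| * (2 * |y1| * |y2|) := by rw [abs_mul, abs_mul, abs_mul]; simp [abs_two]; ring
    _ ≤ |ω| * (y1^2+y2^2) := by
        apply mul_le_mul_of_nonneg_left _ (abs_nonneg ω)
        nlinarith [sq_nonneg (|y1|-|y2|), sq_abs y1, sq_abs y2]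

lemma box_Q_bound (ω x s t : ℝ) (hω1 : -1 < ω) (hω2 : ω < 1) (hx : 0 ≤ x)
    (hs0 : 0 ≤ s) (hs1 : s ≤ 1) (ht0 : 0 ≤ t) (ht1 : t ≤ 1) :
    (x+s)^2 - 2*ω*(x+s)*(ω*x+t) + (ω*x+t)^2 ≤ (1-ω^2)*x^2 + 2*(1-ω^2)*x + 4 := by
  nlinarith [mul_nonneg (mul_nonneg (sub_nonneg.2 hs1) hx)
      (by nlinarith : (0:ℝ) ≤ 1-ω^2),
    mul_nonneg (mul_nonneg (by linarith : (0:ℝ) ≤ 1-ω) hs0) ht0,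
    mul_nonneg (mul_nonneg (by linarith : (0:ℝ) ≤ 1+ω) hs0) ht0,
    mul_nonneg (sub_nonneg.2 hs1) (sub_nonneg.2 ht1),
    mul_nonneg hs0 (sub_nonneg.2 hs1), mul_nonneg ht0 (sub_nonneg.2 ht1)]

lemma box_arg_bound (a1 a2 τ ω x s t : ℝ)
    (hs0 : 0 ≤ s) (hs1 : s ≤ 1) (ht0 : 0 ≤ t) (ht1 : t ≤ 1) :
    (a1+ω*a2)*x - (|a1|+|a2|+|τ|) ≤ a1*(x+s) + a2*(ω*x+t) + τ := by
  nlinarith [mul_nonneg (by linarith [neg_abs_le a1] : (0:ℝ) ≤ a1 + |a1|) hs0,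
    mul_nonneg (abs_nonneg a1) (sub_nonneg.2 hs1),
    mul_nonneg (by linarith [neg_abs_le a2] : (0:ℝ) ≤ a2 + |a2|) ht0,
    mul_nonneg (abs_nonneg a2) (sub_nonneg.2 ht1),
    neg_abs_le τ]

/-- Lemma 1, case (a): if 0 < α₁* < α₂* then the joint tail is negligible
relative to the first marginal tail. -/
theorem esn2_joint_tail_case_a
    (ω : ℝ) (hω : ω ∈ Set.Ioo (-1 : ℝ) 1) (a1 a2 τ : ℝ)
    (h1 : 0 < astar ω a1 a2) (h2 : astar ω a1 a2 < astar ω a2 a1) :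
    Tendsto (fun x : ℝ =>
        ((esn2 ω a1 a2 τ) {y : ℝ × ℝ | x ≤ y.1 ∧ x ≤ y.2}).toReal /
        ((esn2 ω a1 a2 τ) {y : ℝ × ℝ | x ≤ y.1}).toReal)
      atTop (nhds 0) := by
  obtain ⟨hω1, hω2⟩ := hω
  have h1ω2 : (0:ℝ) < 1 - ω^2 := by nlinarith
  have hsω : (0:ℝ) < Real.sqrt (1-ω^2) := Real.sqrt_pos.2 h1ω2
  have hπ : (0:ℝ) < Real.pi := Real.pi_pos
  have hw1 : |ω| < 1 := abs_lt.2 ⟨hω1, hω2⟩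
  have hw0 : (0:ℝ) ≤ |ω| := abs_nonneg ω
  -- constants
  set c := stdCdf (τ / Real.sqrt (1 + a1^2 + a2^2 + 2*ω*a1*a2)) with hc_def
  have hc : 0 < c := stdCdf_pos _
  have hc1 : c ≤ 1 := stdCdf_le_one _
  set d := stdCdf 0 with hd_def
  have hd : 0 < d := stdCdf_pos 0
  set β : ℝ := (1-|ω|)/(2*(1-ω^2)) with hβ_def
  have hβ : 0 < β := div_pos (by linarith) (by linarith)
  set δ : ℝ := β*(1-|ω|)/4 with hδ_def
  have hδ : 0 < δ := by
    apply div_pos (mul_pos hβ (by linarith)); norm_num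
  set γ : ℝ := β*(3+|ω|)/2 with hγ_def
  have hε : (1:ℝ)/2 < γ := by
    rw [hγ_def, hβ_def]
    rw [div_mul_eq_mul_div, div_div, lt_div_iff₀ (by nlinarith : (0:ℝ) < 2*(1-ω^2)*2)]
    nlinarith [sq_abs ω, sq_nonneg (1-|ω|)]
  set f : ℝ × ℝ → ℝ := esn2Density ω a1 a2 τ with hf_def
  have hf0 : ∀ y, 0 ≤ f y := by
    intro y
    apply div_nonneg _ (stdCdf_nonneg _)
    exact mul_nonneg (div_nonneg (Real.exp_pos _).le (by positivity)) (stdCdf_nonneg _)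
  have hfmeas : Measurable f := by
    apply Measurable.div_const
    apply Measurable.mul
    · apply Measurable.div_const
      apply Real.measurable_exp.comp
      fun_prop
    · exact stdCdf_measurable.comp (by fun_prop)
  have hfrepr : ∀ y : ℝ × ℝ, f y =
      Real.exp (-(y.1^2 - 2*ω*y.1*y.2 + y.2^2)/(2*(1-ω^2)))
        * stdCdf (a1*y.1 + a2*y.2 + τ) / (2*Real.pi*Real.sqrt (1-ω^2)) / c := by
    intro y
    rw [hf_def]
    unfold esn2Density phi2
    rw [← hc_def]
    ring
  -- key exponent inequality (global)
  have hF1 : ∀ y1 y2 : ℝ, β*(y1^2+y2^2) ≤ (y1^2-2*ω*y1*y2+y2^2)/(2*(1-ω^2)) := by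
    intro y1 y2
    rw [hβ_def, div_mul_eq_mul_div,
      div_le_div_iff_of_pos_right (by linarith : (0:ℝ) < 2*(1-ω^2))]
    nlinarith [cross_bound ω y1 y2]
  -- global upper bound on the density
  set CU : ℝ := (2*Real.pi*Real.sqrt (1-ω^2)*c)⁻¹ with hCU_def
  have hCU : 0 < CU := by rw [hCU_def]; positivity
  have hglob : ∀ y : ℝ × ℝ, f y ≤ CU * (Real.exp (-β*y.1^2) * Real.exp (-β*y.2^2)) := by
    intro y
    rw [hfrepr y]
    have hE : Real.exp (-(y.1^2 - 2*ω*y.1*y.2 + y.2^2)/(2*(1-ω^2)))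
        ≤ Real.exp (-β*y.1^2) * Real.exp (-β*y.2^2) := by
      rw [← Real.exp_add]
      apply Real.exp_le_exp.2
      have := hF1 y.1 y.2
      rw [neg_div]
      linarith
    calc Real.exp (-(y.1^2 - 2*ω*y.1*y.2 + y.2^2)/(2*(1-ω^2)))
          * stdCdf (a1*y.1 + a2*y.2 + τ) / (2*Real.pi*Real.sqrt (1-ω^2)) / c
        = Real.exp (-(y.1^2 - 2*ω*y.1*y.2 + y.2^2)/(2*(1-ω^2)))
          * stdCdf (a1*y.1 + a2*y.2 + τ) * CU := by
          rw [hCU_def, mul_inv]; field_simp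
      _ ≤ (Real.exp (-β*y.1^2) * Real.exp (-β*y.2^2)) * 1 * CU := by
          apply mul_le_mul_of_nonneg_right _ hCU.le
          exact mul_le_mul hE (stdCdf_le_one _) (stdCdf_nonneg _) (by positivity)
      _ = CU * (Real.exp (-β*y.1^2) * Real.exp (-β*y.2^2)) := by ring
    -- total mass is finite
  have hμ_fin : esn2 ω a1 a2 τ Set.univ ≠ ⊤ := by
    have h0 : esn2 ω a1 a2 τ Set.univ = ∫⁻ y, ENNReal.ofReal (f y) := by
      rw [esn2, withDensity_apply _ MeasurableSet.univ, Measure.restrict_univ]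
    have h1 : ∫⁻ y, ENNReal.ofReal (f y)
        ≤ ∫⁻ y : ℝ × ℝ, ENNReal.ofReal (CU * (Real.exp (-β*y.1^2) * Real.exp (-β*y.2^2))) :=
      lintegral_mono fun y => ENNReal.ofReal_le_ofReal (hglob y)
    have h2 : ∫⁻ y : ℝ × ℝ, ENNReal.ofReal (CU * (Real.exp (-β*y.1^2) * Real.exp (-β*y.2^2)))
        = ENNReal.ofReal (∫ y : ℝ × ℝ, CU * (Real.exp (-β*y.1^2) * Real.exp (-β*y.2^2))) := by
      rw [ofReal_integral_eq_lintegral_ofReal ((gauss2_integrable hβ).const_mul CU)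
        (Filter.Eventually.of_forall fun y => by positivity)]
    rw [h0]
    exact ne_top_of_le_ne_top (by rw [h2]; exact ENNReal.ofReal_ne_top) h1
  -- the positive slant direction
  have hκsq : (0:ℝ) < Real.sqrt (1 + a2^2*(1-ω^2)) :=
    Real.sqrt_pos.2 (by nlinarith [sq_nonneg a2])
  have hκ : 0 < a1 + ω*a2 := by
    have h := h1
    unfold astar at h
    rcases div_pos_iff.mp h with ⟨h', _⟩ | ⟨_, h'⟩
    · exact h'
    · linarith
  set M : ℝ := |a1|+|a2|+|τ| with hM_def
  -- numerator gaussian integral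
  set Iδ : ℝ := ∫ y : ℝ × ℝ, Real.exp (-δ*y.1^2) * Real.exp (-δ*y.2^2) with hIδ_def
  have hIδ0 : 0 ≤ Iδ := integral_nonneg fun y => by positivity
  -- lower-bound constant
  set CL : ℝ := d * Real.exp (-(2/(1-ω^2))) / (2*Real.pi*Real.sqrt (1-ω^2)) with hCL_def
  have hCL : 0 < CL := by rw [hCL_def]; positivity
  -- the squeeze
  have hx1 : ∃ x1 : ℝ, 1 ≤ x1 ∧ M/(a1+ω*a2) ≤ x1 ∧ 2/(γ-1/2) ≤ x1 :=
    ⟨max 1 (max (M/(a1+ω*a2)) (2/(γ-1/2))), le_max_left _ _,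
      le_trans (le_max_left _ _) (le_max_right _ _),
      le_trans (le_max_right _ _) (le_max_right _ _)⟩
  obtain ⟨x1, hx11, hx1M, hx1ε⟩ := hx1
  apply squeeze_zero' (g := fun x => (CU*Iδ/CL) * Real.exp (-x))
  · exact Filter.Eventually.of_forall fun x =>
      div_nonneg ENNReal.toReal_nonneg ENNReal.toReal_nonneg
  · rw [eventually_atTop]
    refine ⟨x1, fun x hx => ?_⟩
    have hx0 : (0:ℝ) ≤ x := by linarith
    -- measurable sets
    have hS : MeasurableSet {y : ℝ × ℝ | x ≤ y.1 ∧ x ≤ y.2} := by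
      have : {y : ℝ × ℝ | x ≤ y.1 ∧ x ≤ y.2}
          = {y : ℝ × ℝ | x ≤ y.1} ∩ {y : ℝ × ℝ | x ≤ y.2} := rfl
      rw [this]
      exact (measurableSet_le measurable_const measurable_fst).inter
        (measurableSet_le measurable_const measurable_snd)
    have hT : MeasurableSet {y : ℝ × ℝ | x ≤ y.1} :=
      measurableSet_le measurable_const measurable_fst
    -- numerator upper bound
    have hNle : ((esn2 ω a1 a2 τ) {y : ℝ × ℝ | x ≤ y.1 ∧ x ≤ y.2}).toReal
        ≤ (CU*Iδ) * Real.exp (-γ*x^2) := by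
      apply ENNReal.toReal_le_of_le_ofReal (by positivity)
      rw [esn2, withDensity_apply _ hS]
      have htail : ∀ y ∈ {y : ℝ × ℝ | x ≤ y.1 ∧ x ≤ y.2},
          ENNReal.ofReal (f y) ≤ ENNReal.ofReal
            ((CU * Real.exp (-γ*x^2)) * (Real.exp (-δ*y.1^2) * Real.exp (-δ*y.2^2))) := by
        rintro y ⟨hy1, hy2⟩
        apply ENNReal.ofReal_le_ofReal
        have h2x : 2*x^2 ≤ y.1^2 + y.2^2 := by
          have ha := pow_le_pow_left₀ hx0 hy1 2
          have hb := pow_le_pow_left₀ hx0 hy2 2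
          linarith
        have hE : Real.exp (-(y.1^2 - 2*ω*y.1*y.2 + y.2^2)/(2*(1-ω^2)))
            ≤ Real.exp (-γ*x^2) * (Real.exp (-δ*y.1^2) * Real.exp (-δ*y.2^2)) := by
          rw [← Real.exp_add, ← Real.exp_add]
          apply Real.exp_le_exp.2
          have hA := hF1 y.1 y.2
          have hB : γ*x^2 + δ*(y.1^2+y.2^2) ≤ β*(y.1^2+y.2^2) := by
            have hkey : γ*x^2 ≤ (β-δ)*(y.1^2+y.2^2) := by
              calc γ*x^2 = (β*(3+|ω|)/4) * (2*x^2) := by rw [hγ_def]; ring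
                _ ≤ (β*(3+|ω|)/4) * (y.1^2+y.2^2) :=
                    mul_le_mul_of_nonneg_left h2x (by positivity)
                _ = (β-δ)*(y.1^2+y.2^2) := by rw [hδ_def]; ring
            linarith
          rw [neg_div]
          linarith
        rw [hfrepr y]
        calc Real.exp (-(y.1^2 - 2*ω*y.1*y.2 + y.2^2)/(2*(1-ω^2)))
              * stdCdf (a1*y.1 + a2*y.2 + τ) / (2*Real.pi*Real.sqrt (1-ω^2)) / c
            = Real.exp (-(y.1^2 - 2*ω*y.1*y.2 + y.2^2)/(2*(1-ω^2)))
              * stdCdf (a1*y.1 + a2*y.2 + τ) * CU := by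
              rw [hCU_def, mul_inv]; field_simp
          _ ≤ (Real.exp (-γ*x^2) * (Real.exp (-δ*y.1^2) * Real.exp (-δ*y.2^2))) * 1 * CU := by
              apply mul_le_mul_of_nonneg_right _ hCU.le
              exact mul_le_mul hE (stdCdf_le_one _) (stdCdf_nonneg _) (by positivity)
          _ = (CU * Real.exp (-γ*x^2)) * (Real.exp (-δ*y.1^2) * Real.exp (-δ*y.2^2)) := by
              ring
      calc ∫⁻ y in {y : ℝ × ℝ | x ≤ y.1 ∧ x ≤ y.2}, ENNReal.ofReal (f y)
          ≤ ∫⁻ y in {y : ℝ × ℝ | x ≤ y.1 ∧ x ≤ y.2}, ENNReal.ofReal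
            ((CU * Real.exp (-γ*x^2)) * (Real.exp (-δ*y.1^2) * Real.exp (-δ*y.2^2))) := by
            apply setLIntegral_mono _ htail
            apply Measurable.ennreal_ofReal
            fun_prop
        _ ≤ ∫⁻ y : ℝ × ℝ, ENNReal.ofReal
            ((CU * Real.exp (-γ*x^2)) * (Real.exp (-δ*y.1^2) * Real.exp (-δ*y.2^2))) :=
            setLIntegral_le_lintegral _ _
        _ = ENNReal.ofReal (∫ y : ℝ × ℝ,
            (CU * Real.exp (-γ*x^2)) * (Real.exp (-δ*y.1^2) * Real.exp (-δ*y.2^2))) := by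
            rw [ofReal_integral_eq_lintegral_ofReal
              ((gauss2_integrable hδ).const_mul _)
              (Filter.Eventually.of_forall fun y => by positivity)]
        _ = ENNReal.ofReal ((CU*Iδ) * Real.exp (-γ*x^2)) := by
            rw [MeasureTheory.integral_const_mul, ← hIδ_def]
            congr 1
            ring
    -- denominator lower bound
    have hDfin : (esn2 ω a1 a2 τ) {y : ℝ × ℝ | x ≤ y.1} ≠ ⊤ :=
      ne_top_of_le_ne_top hμ_fin (measure_mono (Set.subset_univ _))
    have hDge : CL * Real.exp (-(x^2/2) - x)
        ≤ ((esn2 ω a1 a2 τ) {y : ℝ × ℝ | x ≤ y.1}).toReal := by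
      have hbox : ∀ y ∈ Set.Icc x (x+1) ×ˢ Set.Icc (ω*x) (ω*x+1),
          CL * Real.exp (-(x^2/2) - x) ≤ f y := by
        rintro y ⟨⟨hy1l, hy1u⟩, hy2l, hy2u⟩
        set s := y.1 - x with hs_def
        set t := y.2 - ω*x with ht_def
        have hs0 : 0 ≤ s := by simp [hs_def]; linarith
        have hs1 : s ≤ 1 := by simp [hs_def]; linarith
        have ht0 : 0 ≤ t := by simp [ht_def]; linarith
        have ht1 : t ≤ 1 := by simp [ht_def]; linarith
        have hy1 : y.1 = x + s := by rw [hs_def]; ring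
        have hy2 : y.2 = ω*x + t := by rw [ht_def]; ring
        have hQ : (y.1^2 - 2*ω*y.1*y.2 + y.2^2)/(2*(1-ω^2)) ≤ x^2/2 + x + 2/(1-ω^2) := by
          rw [div_le_iff₀ (by linarith : (0:ℝ) < 2*(1-ω^2))]
          have hK : (2/(1-ω^2))*(2*(1-ω^2)) = 4 := by field_simp; ring
          have hre : (x^2/2 + x + 2/(1-ω^2))*(2*(1-ω^2))
              = (1-ω^2)*x^2 + 2*(1-ω^2)*x + (2/(1-ω^2))*(2*(1-ω^2)) := by ring
          have hQ' := box_Q_bound ω x s t hω1 hω2 hx0 hs0 hs1 ht0 ht1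
          rw [hy1, hy2, hre, hK]
          linarith
        have hE : Real.exp (-(2/(1-ω^2))) * Real.exp (-(x^2/2) - x)
            ≤ Real.exp (-(y.1^2 - 2*ω*y.1*y.2 + y.2^2)/(2*(1-ω^2))) := by
          rw [← Real.exp_add]
          apply Real.exp_le_exp.2
          rw [neg_div]
          linarith
        have harg : 0 ≤ a1*y.1 + a2*y.2 + τ := by
          have hb := box_arg_bound a1 a2 τ ω x s t hs0 hs1 ht0 ht1
          rw [← hy1, ← hy2] at hb
          have hxM : M ≤ (a1+ω*a2)*x := by
            rw [← div_le_iff₀' hκ]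
            linarith
          linarith [hb, hxM]
        have hΦ : d ≤ stdCdf (a1*y.1 + a2*y.2 + τ) := stdCdf_mono harg
        rw [hfrepr y]
        calc CL * Real.exp (-(x^2/2) - x)
            = (Real.exp (-(2/(1-ω^2))) * Real.exp (-(x^2/2) - x))
              * d / (2*Real.pi*Real.sqrt (1-ω^2)) := by rw [hCL_def]; ring
          _ ≤ Real.exp (-(y.1^2 - 2*ω*y.1*y.2 + y.2^2)/(2*(1-ω^2)))
              * stdCdf (a1*y.1 + a2*y.2 + τ) / (2*Real.pi*Real.sqrt (1-ω^2)) := by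
              gcongr
          _ ≤ Real.exp (-(y.1^2 - 2*ω*y.1*y.2 + y.2^2)/(2*(1-ω^2)))
              * stdCdf (a1*y.1 + a2*y.2 + τ) / (2*Real.pi*Real.sqrt (1-ω^2)) / c :=
              le_div_self (div_nonneg (mul_nonneg (Real.exp_pos _).le (stdCdf_nonneg _)) (by positivity)) hc hc1
      have hkey : ENNReal.ofReal (CL * Real.exp (-(x^2/2) - x))
          ≤ (esn2 ω a1 a2 τ) {y : ℝ × ℝ | x ≤ y.1} := by
        rw [esn2, withDensity_apply _ hT]
        have hBsub : Set.Icc x (x+1) ×ˢ Set.Icc (ω*x) (ω*x+1) ⊆ {y : ℝ × ℝ | x ≤ y.1} :=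
          fun y hy => hy.1.1
        have hvol : volume (Set.Icc x (x+1) ×ˢ Set.Icc (ω*x) (ω*x+1)) = 1 := by
          rw [Measure.volume_eq_prod, Measure.prod_prod, Real.volume_Icc, Real.volume_Icc]
          norm_num
        calc ENNReal.ofReal (CL * Real.exp (-(x^2/2) - x))
            = ENNReal.ofReal (CL * Real.exp (-(x^2/2) - x))
              * volume (Set.Icc x (x+1) ×ˢ Set.Icc (ω*x) (ω*x+1)) := by rw [hvol, mul_one]
          _ = ∫⁻ _ in Set.Icc x (x+1) ×ˢ Set.Icc (ω*x) (ω*x+1),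
              ENNReal.ofReal (CL * Real.exp (-(x^2/2) - x)) := by
              rw [setLIntegral_const]
          _ ≤ ∫⁻ y in Set.Icc x (x+1) ×ˢ Set.Icc (ω*x) (ω*x+1), ENNReal.ofReal (f y) := by
              apply setLIntegral_mono (hfmeas.ennreal_ofReal)
              exact fun y hy => ENNReal.ofReal_le_ofReal (hbox y hy)
          _ ≤ ∫⁻ y in {y : ℝ × ℝ | x ≤ y.1}, ENNReal.ofReal (f y) :=
              lintegral_mono_set hBsub
      have := ENNReal.toReal_mono hDfin hkey
      rwa [ENNReal.toReal_ofReal (by positivity)] at this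
    -- combine
    have hD0 : 0 < ((esn2 ω a1 a2 τ) {y : ℝ × ℝ | x ≤ y.1}).toReal :=
      lt_of_lt_of_le (mul_pos hCL (Real.exp_pos _)) hDge
    calc ((esn2 ω a1 a2 τ) {y : ℝ × ℝ | x ≤ y.1 ∧ x ≤ y.2}).toReal /
          ((esn2 ω a1 a2 τ) {y : ℝ × ℝ | x ≤ y.1}).toReal
        ≤ ((CU*Iδ) * Real.exp (-γ*x^2)) / (CL * Real.exp (-(x^2/2) - x)) :=
          div_le_div₀ (mul_nonneg (mul_nonneg hCU.le hIδ0) (Real.exp_pos _).le) hNle (mul_pos hCL (Real.exp_pos _)) hDge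
      _ = (CU*Iδ/CL) * (Real.exp (-γ*x^2) / Real.exp (-(x^2/2) - x)) :=
          mul_div_mul_comm _ _ _ _
      _ = (CU*Iδ/CL) * Real.exp ((-γ*x^2) - (-(x^2/2) - x)) := by
          rw [← Real.exp_sub]
      _ ≤ (CU*Iδ/CL) * Real.exp (-x) := by
          apply mul_le_mul_of_nonneg_left _
            (div_nonneg (mul_nonneg hCU.le hIδ0) hCL.le)
          apply Real.exp_le_exp.2
          have hεx : (γ-1/2) * x ≥ 2 := by
            rw [ge_iff_le, ← div_le_iff₀' (by linarith)]
            linarith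
          have h5 := mul_le_mul_of_nonneg_right hεx hx0
          nlinarith [h5]
  · have h := (Real.tendsto_exp_neg_atTop_nhds_zero).const_mul (CU*Iδ/CL)
    simpa using h
end

section
/- Let ω ∈ (−1,1), α = (α₁,α₂) ∈ ℝ², τ ∈ ℝ. Then the bivariate extended skew-normal density factorizes as marginal times extended skew-normal conditional: for all (x₁,x₂) ∈ ℝ², φ₂(x₁,x₂;ω)·Φ(α₁x₁+α₂x₂+τ)/Φ(τ/√(1+α₁²+α₂²+2ωα₁α₂)) = [φ(x₂)·Φ(α₂* x₂ + τ₂*)/Φ(τ₂*/√(1+α₂*²))] · [ (1/√(1−ω²))·φ(z)·Φ(α_c z + τ_c)/Φ(τ_c/√(1+α_c²)) ], where z = (x₁−ωx₂)/√(1−ω²), α_c = α₁√(1−ω²), τ_c = (α₂+ωα₁)x₂ + τ, α₂* = (α₂+ωα₁)/√(1+α₁²(1−ω²)) and τ₂* = τ/√(1+α₁²(1−ω²)). In particular, conditionally on the second coordinate being x₂, the first coordinate of ESN₂(ω,α,τ) follows an extended skew-normal distribution with location ωx₂, scale √(1−ω²), slant α₁√(1−ω²) and extension (α₂+ωα₁)x₂+τ.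 -/
open MeasureTheory Filter Matrix

/-- The bivariate extended skew-normal density factorizes as the second marginal
(univariate ESN) times an extended skew-normal conditional density with location
ωx₂, scale √(1−ω²), slant α₁√(1−ω²) and extension (α₂+ωα₁)x₂+τ. -/
theorem esn2_conditional_factorization
    (ω : ℝ) (hω : ω ∈ Set.Ioo (-1 : ℝ) 1) (a1 a2 τ : ℝ) (x1 x2 : ℝ) :
    esn2Density ω a1 a2 τ (x1, x2) =
      (stdPdf x2 * stdCdf (astar ω a2 a1 * x2 + tstar ω a1 τ) /
        stdCdf (tstar ω a1 τ / Real.sqrt (1 + (astar ω a2 a1)^2))) *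
      ((1 / Real.sqrt (1-ω^2)) *
        stdPdf ((x1 - ω*x2) / Real.sqrt (1-ω^2)) *
        stdCdf (a1 * Real.sqrt (1-ω^2) * ((x1 - ω*x2) / Real.sqrt (1-ω^2))
          + ((a2 + ω*a1) * x2 + τ)) /
        stdCdf (((a2 + ω*a1) * x2 + τ) / Real.sqrt (1 + (a1 * Real.sqrt (1-ω^2))^2))) := by
  obtain ⟨hω1, hω2⟩ := hω
  have h1 : (0:ℝ) < 1 - ω^2 := by nlinarith
  have hs : 0 < Real.sqrt (1-ω^2) := Real.sqrt_pos.mpr h1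
  have hs2 : (Real.sqrt (1-ω^2))^2 = 1-ω^2 := Real.sq_sqrt h1.le
  have hP : (0:ℝ) < 1 + a1^2*(1-ω^2) := by positivity
  have hs1 : 0 < Real.sqrt (1 + a1^2*(1-ω^2)) := Real.sqrt_pos.mpr hP
  have hs1sq : (Real.sqrt (1 + a1^2*(1-ω^2)))^2 = 1 + a1^2*(1-ω^2) := Real.sq_sqrt hP.le
  have hD : (0:ℝ) < 1 + a1^2 + a2^2 + 2*ω*a1*a2 := by nlinarith [sq_nonneg (a1+ω*a2), sq_nonneg a2]
  have hsD : 0 < Real.sqrt (1 + a1^2 + a2^2 + 2*ω*a1*a2) := Real.sqrt_pos.mpr hD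
  -- argument identities
  have harg1 : a1 * Real.sqrt (1-ω^2) * ((x1 - ω*x2) / Real.sqrt (1-ω^2))
      + ((a2 + ω*a1) * x2 + τ) = a1*x1 + a2*x2 + τ := by
    field_simp
    ring
  have harg2 : ((a2 + ω*a1) * x2 + τ) / Real.sqrt (1 + (a1 * Real.sqrt (1-ω^2))^2)
      = astar ω a2 a1 * x2 + tstar ω a1 τ := by
    unfold astar tstar
    rw [mul_pow, hs2]
    field_simp
  have harg3 : tstar ω a1 τ / Real.sqrt (1 + (astar ω a2 a1)^2)
      = τ / Real.sqrt (1 + a1^2 + a2^2 + 2*ω*a1*a2) := by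
    unfold astar tstar
    rw [div_pow, hs1sq]
    rw [show (1 : ℝ) + (a2 + ω*a1)^2 / (1 + a1^2*(1-ω^2))
        = (1 + a1^2 + a2^2 + 2*ω*a1*a2) / (1 + a1^2*(1-ω^2)) by field_simp; ring]
    rw [Real.sqrt_div hD.le]
    rw [div_div_div_comm, div_self hs1.ne', div_one]
  -- density factorization
  have hphi : phi2 ω (x1, x2) = stdPdf x2 * stdPdf ((x1 - ω*x2) / Real.sqrt (1-ω^2))
      / Real.sqrt (1-ω^2) := by
    unfold phi2 stdPdf
    have hpi : Real.sqrt (2*Real.pi) * Real.sqrt (2*Real.pi) = 2*Real.pi :=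
      Real.mul_self_sqrt (by positivity)
    have hexp : -(x2^2)/2 + -(((x1 - ω*x2) / Real.sqrt (1-ω^2))^2)/2
        = -((x1^2 - 2*ω*x1*x2 + x2^2)/(2*(1-ω^2))) := by
      rw [div_pow, hs2]
      field_simp
      ring
    rw [div_mul_div_comm, ← Real.exp_add, hexp, hpi]
    ring_nf
  rw [esn2Density, hphi, harg1, harg2, harg3]
  have h3 := (stdCdf_pos (astar ω a2 a1 * x2 + tstar ω a1 τ)).ne'
  have h2 := (stdCdf_pos (τ / Real.sqrt (1 + a1^2 + a2^2 + 2*ω*a1*a2))).ne'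
  field_simp
  rw [mul_div_mul_right _ _ (show stdCdf (x2 * astar ω a2 a1 + tstar ω a1 τ) ≠ 0 by rw [mul_comm x2]; exact h3)]
end
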